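/- arXiv:0806.4318 — 4 statements merged into one kernel-verified Lean document; each statement's English description precedes it below -/
import Mathlib

section
/- The number of standard Young tableaux of shape (n₁, ..., n_d) with n₁ ≥ n₂ ≥ ... ≥ n_d ≥ 0 equals ∏_{1≤i<j≤d} (n_i - n_j + j - i) · (n₁ + ... + n_d)! / ((n₁+d-1)!(n₂+d-2)!···n_d!). -/
/-!
Splitting a walk at its last step gives `f(n) = ∑ⱼ f(n - eⱼ)`, the sum running over the rows `j`
that end in a removable box, and `f(0) = 1`. With `ℓᵢ = nᵢ + d - 1 - i` and the Vandermonde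
product `Δ(ℓ) = ∏_{i<k} (ℓᵢ - ℓₖ)`, the right-hand side is `Δ(ℓ) (∑ᵢ nᵢ)! / ∏ ℓᵢ!`, and it satisfies
the same recursion by the identity `∑ⱼ ℓⱼ Δ(ℓ - eⱼ) = (∑ⱼ ℓⱼ - C(d, 2)) Δ(ℓ)`; a row that is not
removable contributes `0` to it because then `ℓⱼ = 0` or `ℓⱼ - 1 = ℓⱼ₊₁`. For `P = ∏ᵢ (X - ℓᵢ)`
one has `Δ(ℓ - eⱼ) / Δ(ℓ) = -P(ℓⱼ - 1) / P'(ℓⱼ)`, so by Lagrange interpolation the left-hand side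
of the identity is `-Δ(ℓ)` times the `X^(d-1)` coefficient of the remainder of `X P(X - 1)`
modulo `P`, which only involves the two coefficients of `P` below the leading one.
-/

open Finset Polynomial Lagrange
open scoped Nat

/-- Number of lattice walks in `ℤ^d` from the origin to `n` using unit positive coordinate
steps, staying at all times in the region `x₁ ≥ x₂ ≥ ... ≥ x_d ≥ 0`.  A walk is recorded
as the sequence of coordinate indices of its steps; this is the number of standard Young
tableaux of shape `(n₁, ..., n_d)`. -/
noncomputable def ballotWalks (d : ℕ) (n : Fin d → ℕ) : ℕ :=
  Nat.card {g : Fin (∑ i, n i) → Fin d //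
    (∀ (k : ℕ) (i j : Fin d), i ≤ j →
      (Finset.univ.filter (fun t : Fin (∑ i, n i) => (t : ℕ) < k ∧ g t = j)).card ≤
      (Finset.univ.filter (fun t : Fin (∑ i, n i) => (t : ℕ) < k ∧ g t = i)).card) ∧
    (∀ j : Fin d, (Finset.univ.filter (fun t : Fin (∑ i, n i) => g t = j)).card = n j)}

section Vandermonde

variable {R : Type*} [CommRing R] {d : ℕ}

def vandermondeProd (v : Fin d → R) : R := ∏ i, ∏ k ∈ Ioi i, (v i - v k)

lemma vandermondeProd_eq_prod_filter (v : Fin d → R) :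
    vandermondeProd v =
      ∏ p ∈ univ.filter (fun p : Fin d × Fin d => p.1 < p.2), (v p.1 - v p.2) := by
  rw [prod_filter, Fintype.prod_prod_type, vandermondeProd]
  refine prod_congr rfl fun i _ => ?_
  rw [← prod_filter]
  congr 1
  ext k
  simp

lemma vandermondeProd_eq_zero {v : Fin d → R} {i k : Fin d} (hik : i < k) (h : v i = v k) :
    vandermondeProd v = 0 :=
  prod_eq_zero (mem_univ i) (prod_eq_zero (mem_Ioi.mpr hik) (sub_eq_zero.mpr h))

-- Over the pairs `i < k`, the pairs that contain `j` contribute `h` of their other index.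
lemma prod_prod_Ioi_ite_mul_ite (h : Fin d → R) (j : Fin d) :
    ∏ i, ∏ k ∈ Ioi i, ((if i = j then h k else 1) * (if k = j then h i else 1)) =
      ∏ i ∈ univ.erase j, h i := by
  simp only [prod_mul_distrib, prod_ite_irrel, prod_const_one, prod_ite_eq', mem_univ,
    if_true, mem_Ioi]
  rw [← prod_filter, ← prod_union (disjoint_left.mpr fun i hi hi' => by
    simp only [mem_Ioi, mem_filter] at hi hi'
    exact lt_asymm hi hi'.2)]
  congr 1
  ext i
  simp only [mem_union, mem_Ioi, mem_filter, mem_univ, true_and, mem_erase, and_true]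
  exact or_comm.trans lt_or_lt_iff_ne

lemma vandermondeProd_update_mul (v : Fin d → R) (j : Fin d) (x : R) :
    vandermondeProd (Function.update v j x) * ∏ i ∈ univ.erase j, (v j - v i) =
      vandermondeProd v * ∏ i ∈ univ.erase j, (x - v i) := by
  simp only [vandermondeProd, ← prod_prod_Ioi_ite_mul_ite, ← prod_mul_distrib]
  refine prod_congr rfl fun i _ => prod_congr rfl fun k hk => ?_
  have hik : i ≠ k := (mem_Ioi.mp hk).ne
  by_cases hi : i = j
  · subst hi
    simp only [Function.update_self, Function.update_of_ne hik.symm, if_pos, if_neg hik.symm]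
    ring
  by_cases hk : k = j
  · subst hk
    simp only [Function.update_self, Function.update_of_ne hi, if_pos, if_neg hi]
    ring
  · simp [hi, hk]

lemma vandermondeProd_staircase : vandermondeProd (fun i : Fin d => ((d - 1 - i : ℕ) : R)) =
    ∏ i : Fin d, ((d - 1 - i : ℕ)! : R) := by
  cases d with
  | zero => simp [vandermondeProd]
  | succ n =>
    have hfactors : ∀ i : Fin (n + 1), ∀ k ∈ Ioi i,
        ((n + 1 - 1 - i : ℕ) : R) - ((n + 1 - 1 - k : ℕ) : R) = (k : R) - (i : R) := by
      intro i k hk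
      have hik : (i : ℕ) < k := Fin.lt_def.mp (mem_Ioi.mp hk)
      have hsplit : n + 1 - 1 - (i : ℕ) = (n + 1 - 1 - k) + (k - i) := by omega
      rw [hsplit, Nat.cast_add, Nat.cast_sub hik.le]
      ring
    have hsf : ∏ j ∈ range (n + 1), (j ! : R) = n.superFactorial := by
      rw [prod_range_succ', ← Nat.prod_range_factorial_succ]
      push_cast
      simp
    unfold vandermondeProd
    rw [prod_congr rfl fun i _ => prod_congr rfl (hfactors i),
      ← Matrix.det_vandermonde, Matrix.det_vandermonde_id_eq_superFactorial, ← hsf,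
      Fin.prod_univ_eq_prod_range (fun j => ((n + 1 - 1 - j)! : R))]
    exact (prod_range_reflect (fun j => (j ! : R)) _).symm

end Vandermonde

lemma two_mul_coeff_nodal {R ι : Type*} [CommRing R] (s : Finset ι) (a : ι → R) {k : ℕ}
    (hs : #s = k + 2) :
    2 * (nodal s a).coeff k = (∑ i ∈ s, a i) ^ 2 - ∑ i ∈ s, a i ^ 2 := by
  classical
  induction s using Finset.cons_induction generalizing k with
  | empty => simp at hs
  | cons x t hx ih =>
    rw [card_cons] at hs
    rw [nodal, prod_cons, ← nodal, sum_cons, sum_cons]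
    cases k with
    | zero =>
      obtain ⟨y, rfl⟩ := card_eq_one.mp (by omega : #t = 1)
      simp only [nodal, prod_singleton, mul_coeff_zero, coeff_sub, coeff_X_zero, coeff_C_zero,
        zero_sub, mul_neg, neg_mul, neg_neg, sum_singleton]
      ring
    | succ k =>
      have hlin : (nodal t a).coeff (k + 1) = -∑ i ∈ t, a i := by
        rw [nodal, show k + 1 = #t - 1 by omega]
        exact prod_X_sub_C_coeff_card_pred t a (by omega)
      rw [sub_mul, coeff_sub, coeff_X_mul, coeff_C_mul, mul_sub, ih (by omega), hlin]
      ring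

section ShiftRemainder

variable {R ι : Type*} [CommRing R] (s : Finset ι) (a : ι → R)

-- `X P(X - 1)` reduced modulo `P = nodal s a`; the quotient is `X - #s`.
noncomputable def shiftRemainder : R[X] := X * nodal s (a · + 1) - (X - C (#s : R)) * nodal s a

lemma coeff_shiftRemainder_succ (m : ℕ) :
    (shiftRemainder s a).coeff (m + 1) =
      (nodal s (a · + 1)).coeff m - (nodal s a).coeff m + #s * (nodal s a).coeff (m + 1) := by
  simp only [shiftRemainder, coeff_sub, coeff_X_mul, sub_mul, coeff_C_mul]
  ring

lemma coeff_nodal_of_card_le [Nontrivial R] {m : ℕ} (hm : #s ≤ m) :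
    (nodal s a).coeff m = if m = #s then 1 else 0 := by
  split_ifs with h
  · simpa [h] using (nodal_monic (s := s) (v := a)).coeff_natDegree
  · exact coeff_eq_zero_of_natDegree_lt (by rw [natDegree_nodal]; omega)

lemma coeff_nodal_card_sub_one (hs : 0 < #s) : (nodal s a).coeff (#s - 1) = -∑ i ∈ s, a i :=
  prod_X_sub_C_coeff_card_pred s a hs

lemma degree_shiftRemainder_lt [Nontrivial R] : (shiftRemainder s a).degree < #s := by
  rcases s.eq_empty_or_nonempty with rfl | hs
  · simp [shiftRemainder]
  rw [degree_lt_iff_coeff_zero]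
  intro m hm
  obtain ⟨m, rfl⟩ : ∃ m', m = m' + 1 := ⟨m - 1, by have := hs.card_pos; omega⟩
  rw [coeff_shiftRemainder_succ]
  rcases (by omega : m + 1 = #s ∨ #s ≤ m) with hm | hm
  · rw [show m = #s - 1 by omega, coeff_nodal_card_sub_one _ _ hs.card_pos,
      coeff_nodal_card_sub_one _ _ hs.card_pos, Nat.sub_add_cancel hs.card_pos,
      coeff_nodal_of_card_le _ _ le_rfl, if_pos rfl, sum_add_distrib, sum_const, nsmul_one]
    ring
  · rw [coeff_nodal_of_card_le _ _ hm, coeff_nodal_of_card_le _ _ hm,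
      coeff_nodal_of_card_le _ _ (by omega), if_neg (show m + 1 ≠ #s by omega)]
    ring

lemma eval_shiftRemainder [DecidableEq ι] {i : ι} (hi : i ∈ s) :
    (shiftRemainder s a).eval (a i) = -(a i * ∏ k ∈ s.erase i, (a i - 1 - a k)) := by
  have hP : (nodal s a).eval (a i) = 0 := eval_nodal_at_node hi
  have hQ : (nodal s (a · + 1)).eval (a i) = -∏ k ∈ s.erase i, (a i - 1 - a k) := by
    rw [eval_nodal, ← mul_prod_erase s _ hi]
    simp [sub_sub, add_comm]
  simp [shiftRemainder, hP, hQ]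

lemma coeff_shiftRemainder_card_sub_one {K : Type*} [Field K] [CharZero K] (a : ι → K)
    (hs : 2 ≤ #s) : (shiftRemainder s a).coeff (#s - 1) = (#s).choose 2 - ∑ i ∈ s, a i := by
  obtain ⟨k, hk⟩ : ∃ k, #s = k + 2 := ⟨#s - 2, by omega⟩
  have hP1 := coeff_nodal_card_sub_one s a (by omega)
  have hP2 := two_mul_coeff_nodal s a hk
  have hQ2 := two_mul_coeff_nodal s (a · + 1) hk
  have hsum : ∑ i ∈ s, (a i + 1) = ∑ i ∈ s, a i + #s := by simp [sum_add_distrib]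
  have hsq : ∑ i ∈ s, (a i + 1) ^ 2 = ∑ i ∈ s, a i ^ 2 + 2 * ∑ i ∈ s, a i + #s := by
    simp [add_sq, sum_add_distrib, mul_sum]
  rw [hsum, hsq, hk] at hQ2
  rw [hk, show k + 2 - 1 = k + 1 from rfl] at hP1 ⊢
  rw [coeff_shiftRemainder_succ, Nat.cast_choose_two, hk, hP1]
  apply mul_left_cancel₀ (two_ne_zero' K)
  push_cast at hQ2 ⊢
  linear_combination hQ2 - hP2

end ShiftRemainder

lemma sum_mul_vandermondeProd_update_sub_one {K : Type*} [Field K] [CharZero K] {d : ℕ}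
    {v : Fin d → K} (hv : Function.Injective v) :
    ∑ j, v j * vandermondeProd (Function.update v j (v j - 1)) =
      (∑ j, v j - d.choose 2) * vandermondeProd v := by
  rcases lt_or_ge d 2 with hd | hd
  · interval_cases d <;> simp [vandermondeProd]
  have hcard : #(univ : Finset (Fin d)) = d := card_fin d
  have hterm : ∀ j, v j * vandermondeProd (Function.update v j (v j - 1)) =
      -vandermondeProd v *
        ((shiftRemainder univ v).eval (v j) / ∏ i ∈ univ.erase j, (v j - v i)) := by
    intro j
    have hnodes : ∏ i ∈ univ.erase j, (v j - v i) ≠ 0 :=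
      prod_ne_zero_iff.mpr fun i hi => sub_ne_zero.mpr (hv.ne (ne_of_mem_erase hi).symm)
    rw [eval_shiftRemainder _ _ (mem_univ j), mul_div_assoc', eq_div_iff hnodes]
    linear_combination v j * vandermondeProd_update_mul v j (v j - 1)
  simp_rw [hterm, ← mul_sum, ← coeff_eq_sum hv.injOn (degree_shiftRemainder_lt univ v),
    coeff_shiftRemainder_card_sub_one _ _ (hcard ▸ hd), hcard]
  ring

section StepCount

variable {α : Type*} [DecidableEq α] {m : ℕ}

def stepCount (g : Fin m → α) (k : ℕ) (i : α) : ℕ := #{t : Fin m | (t : ℕ) < k ∧ g t = i}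

lemma stepCount_of_le (g : Fin m → α) {k : ℕ} (hk : m ≤ k) (i : α) :
    stepCount g k i = #{t | g t = i} := by
  simp only [stepCount]
  congr 1
  exact filter_congr fun t _ => and_iff_right (t.isLt.trans_le hk)

lemma card_filter_eq_init_add (g : Fin (m + 1) → α) (i : α) :
    #{t | g t = i} = #{t | Fin.init g t = i} + if g (Fin.last m) = i then 1 else 0 := by
  rw [card_filter, card_filter, Fin.sum_univ_castSucc]
  rfl

lemma stepCount_init (g : Fin (m + 1) → α) (k : ℕ) :
    stepCount (Fin.init g) k = stepCount g (min k m) := by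
  ext i
  rw [stepCount, stepCount, card_filter, card_filter, Fin.sum_univ_castSucc, Fin.val_last,
    if_neg fun h => (min_le_right k m).not_gt h.1, add_zero]
  refine sum_congr rfl fun t _ => ?_
  simp only [Fin.init, Fin.val_castSucc, lt_min_iff, t.isLt, and_true]
  congr

end StepCount

section BallotWalk

variable {d m : ℕ} {n : Fin d → ℕ}

def IsBallotWalk (n : Fin d → ℕ) (g : Fin m → Fin d) : Prop :=
  (∀ k, Antitone (stepCount g k)) ∧ ∀ i, #{t | g t = i} = n i

lemma ballotWalks_eq_card (h : ∑ i, n i = m) :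
    ballotWalks d n = Nat.card {g : Fin m → Fin d // IsBallotWalk n g} := by
  subst h
  rfl

lemma IsBallotWalk.antitone {g : Fin m → Fin d} (h : IsBallotWalk n g) : Antitone n := by
  intro i j hij
  simpa only [stepCount_of_le g le_rfl, h.2] using h.1 m hij

lemma isBallotWalk_iff_init {j : Fin d} (hn : Antitone n) (hj : 0 < n j)
    {g : Fin (m + 1) → Fin d} (hg : g (Fin.last m) = j) :
    IsBallotWalk n g ↔ IsBallotWalk (Function.update n j (n j - 1)) (Fin.init g) := by
  have hcount : (∀ i, #{t | g t = i} = n i) ↔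
      ∀ i, #{t | Fin.init g t = i} = Function.update n j (n j - 1) i := by
    refine forall_congr' fun i => ?_
    rw [card_filter_eq_init_add, hg]
    rcases eq_or_ne j i with rfl | hji
    · simp only [Function.update_self, if_true]
      omega
    · simp [hji, Function.update_of_ne hji.symm]
  constructor
  · rintro ⟨hwalk, htot⟩
    exact ⟨fun k => stepCount_init g k ▸ hwalk _, hcount.mp htot⟩
  · rintro ⟨hwalk, htot⟩
    refine ⟨fun k => ?_, hcount.mpr htot⟩
    rcases le_or_gt k m with hk | hk
    · simpa [stepCount_init, min_eq_left hk] using hwalk k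
    · rwa [show stepCount g k = n from
        funext fun i => (stepCount_of_le g hk i).trans (hcount.mpr htot i)]

lemma card_isBallotWalk_last_eq {j : Fin d} (hn : Antitone n) (hj : 0 < n j) :
    Nat.card {g : Fin (m + 1) → Fin d // IsBallotWalk n g ∧ g (Fin.last m) = j} =
      Nat.card {g : Fin m → Fin d // IsBallotWalk (Function.update n j (n j - 1)) g} :=
  Nat.card_congr
    { toFun := fun g => ⟨Fin.init g.1, (isBallotWalk_iff_init hn hj g.2.2).mp g.2.1⟩
      invFun := fun g => ⟨Fin.snoc g.1 j,
        (isBallotWalk_iff_init hn hj (Fin.snoc_last _ _)).mpr (by rw [Fin.init_snoc]; exact g.2),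
        Fin.snoc_last _ _⟩
      left_inv := fun g => Subtype.ext (by simp [← g.2.2])
      right_inv := fun g => Subtype.ext (by simp) }

lemma card_isBallotWalk_zero : Nat.card {g : Fin 0 → Fin d // IsBallotWalk 0 g} = 1 :=
  Nat.card_eq_one_iff_exists.mpr
    ⟨⟨Fin.elim0, fun k i j _ => by simp [stepCount], fun i => by simp⟩,
      fun g => Subtype.ext (funext fun t => t.elim0)⟩

def IsRemovableRow (n : Fin d → ℕ) (j : Fin d) : Prop :=
  0 < n j ∧ ∀ k : Fin d, (k : ℕ) = j + 1 → n k < n j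

instance (n : Fin d → ℕ) : DecidablePred (IsRemovableRow n) :=
  fun _ => inferInstanceAs (Decidable (_ ∧ _))

lemma IsRemovableRow.antitone_update {j : Fin d} (hn : Antitone n) (hj : IsRemovableRow n j) :
    Antitone (Function.update n j (n j - 1)) := by
  intro a b hab
  have hnab := hn hab
  rcases eq_or_ne b j with rfl | hb
  · rw [Function.update_self]
    rcases eq_or_ne a b with rfl | ha
    · simp
    · rw [Function.update_of_ne ha]
      omega
  rw [Function.update_of_ne hb]
  rcases eq_or_ne a j with rfl | ha
  · have hlt : (a : ℕ) < b := Fin.lt_def.mp (lt_of_le_of_ne hab hb.symm)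
    have hsucc := hj.2 ⟨a + 1, by omega⟩ rfl
    have hle := hn (show (⟨a + 1, by omega⟩ : Fin d) ≤ b from Fin.le_def.mpr hlt)
    rw [Function.update_self]
    omega
  · rw [Function.update_of_ne ha]
    exact hnab

lemma not_antitone_update_of_not_isRemovableRow {j : Fin d} (hj : 0 < n j)
    (hc : ¬IsRemovableRow n j) :
    ¬Antitone (Function.update n j (n j - 1)) := by
  intro hanti
  obtain ⟨k, hk, hle⟩ : ∃ k : Fin d, (k : ℕ) = j + 1 ∧ n j ≤ n k := by
    simpa [IsRemovableRow, hj] using hc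
  have hjk : j ≠ k := fun h => by omega
  have hmono := hanti (show j ≤ k from Fin.le_def.mpr (by omega))
  simp only [Function.update_self, Function.update_of_ne hjk.symm] at hmono
  omega

lemma card_isBallotWalk_succ (hn : Antitone n) :
    Nat.card {g : Fin (m + 1) → Fin d // IsBallotWalk n g} =
      ∑ j, if IsRemovableRow n j then
        Nat.card {g : Fin m → Fin d // IsBallotWalk (Function.update n j (n j - 1)) g} else 0 := by
  let byLastStep : {g : Fin (m + 1) → Fin d // IsBallotWalk n g} ≃
      Σ j, {g : Fin (m + 1) → Fin d // IsBallotWalk n g ∧ g (Fin.last m) = j} :=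
    { toFun := fun g => ⟨g.1 (Fin.last m), g.1, g.2, rfl⟩
      invFun := fun x => ⟨x.2.1, x.2.2.1⟩
      left_inv := fun _ => rfl
      right_inv := by rintro ⟨_, g, hg, rfl⟩; rfl }
  rw [Nat.card_congr byLastStep, Nat.card_sigma]
  refine sum_congr rfl fun j _ => ?_
  split_ifs with hc
  · exact card_isBallotWalk_last_eq hn hc.1
  rcases Nat.eq_zero_or_pos (n j) with hj | hj
  · refine Nat.card_eq_zero.mpr (.inl ⟨fun ⟨g, hg, hlast⟩ => ?_⟩)
    have := hg.2 j
    rw [card_filter_eq_init_add, if_pos hlast] at this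
    omega
  · rw [card_isBallotWalk_last_eq hn hj]
    exact Nat.card_eq_zero.mpr
      (.inl ⟨fun g => not_antitone_update_of_not_isRemovableRow hj hc g.2.antitone⟩)

end BallotWalk

section HookFormula

variable {d m : ℕ} {n : Fin d → ℕ}

def shifted (n : Fin d → ℕ) (i : Fin d) : ℕ := n i + (d - 1 - i)

noncomputable def hookFormula (n : Fin d → ℕ) : ℚ :=
  vandermondeProd (fun i => (shifted n i : ℚ)) * (∑ i, n i)! / ∏ i, ((shifted n i)! : ℚ)

lemma shifted_strictAnti (hn : Antitone n) : StrictAnti (shifted n) := by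
  intro i k hik
  have hnik := hn hik.le
  have hik' := Fin.lt_def.mp hik
  have hk := k.isLt
  simp only [shifted]
  omega

lemma sum_shifted (n : Fin d → ℕ) : ∑ i, shifted n i = ∑ i, n i + d.choose 2 := by
  simp only [shifted]
  rw [sum_add_distrib, Fin.sum_univ_eq_sum_range (fun i => d - 1 - i),
    sum_range_reflect (fun i => i) d, sum_range_id, Nat.choose_two_right]

lemma sum_update_sub_one {j : Fin d} (hj : 0 < n j) (hsum : ∑ i, n i = m + 1) :
    ∑ i, Function.update n j (n j - 1) i = m := by
  rw [sum_update_of_mem (mem_univ j)]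
  rw [← add_sum_erase univ n (mem_univ j), ← sdiff_singleton_eq_erase] at hsum
  omega

lemma hookFormula_zero : hookFormula (0 : Fin d → ℕ) = 1 := by
  have hprod : ∏ i : Fin d, ((d - 1 - i : ℕ)! : ℚ) ≠ 0 :=
    prod_ne_zero_iff.mpr fun i _ => by positivity
  simp only [hookFormula, shifted, Pi.zero_apply, zero_add, sum_const_zero, Nat.factorial_zero,
    Nat.cast_one, mul_one, vandermondeProd_staircase, div_self hprod]

lemma shifted_update_sub_one {j : Fin d} (hj : 0 < n j) :
    shifted (Function.update n j (n j - 1)) = Function.update (shifted n) j (shifted n j - 1) := by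
  ext i
  rcases eq_or_ne i j with rfl | hij
  · simp only [shifted, Function.update_self]
    omega
  · simp [shifted, Function.update_of_ne hij]

lemma hookFormula_update_sub_one {j : Fin d} (hj : IsRemovableRow n j)
    (hsum : ∑ i, n i = m + 1) :
    hookFormula (Function.update n j (n j - 1)) =
      (shifted n j : ℚ) * vandermondeProd (Function.update (fun i => (shifted n i : ℚ)) j
        (shifted n j - 1)) * m ! / ∏ i, ((shifted n i)! : ℚ) := by
  have hpos : 0 < shifted n j := by
    have := hj.1
    simp only [shifted]
    omega
  have hcast : (fun i => (shifted (Function.update n j (n j - 1)) i : ℚ)) =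
      Function.update (fun i => (shifted n i : ℚ)) j (shifted n j - 1) := by
    ext i
    rw [shifted_update_sub_one hj.1]
    rcases eq_or_ne i j with rfl | hij
    · simp [Nat.cast_sub hpos]
    · simp [Function.update_of_ne hij]
  have hfact : ∏ i, ((shifted n i)! : ℚ) =
      shifted n j * ∏ i, ((shifted (Function.update n j (n j - 1)) i)! : ℚ) := by
    rw [shifted_update_sub_one hj.1, ← mul_prod_erase univ _ (mem_univ j),
      ← mul_prod_erase univ _ (mem_univ j), Function.update_self, ← mul_assoc, ← Nat.cast_mul,
      Nat.mul_factorial_pred hpos.ne']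
    congr 1
    exact prod_congr rfl fun i hi => by rw [Function.update_of_ne (ne_of_mem_erase hi)]
  have hprod : ∏ i, ((shifted (Function.update n j (n j - 1)) i)! : ℚ) ≠ 0 :=
    prod_ne_zero_iff.mpr fun i _ => by positivity
  rw [hookFormula, hcast, sum_update_sub_one hj.1 hsum, hfact]
  field_simp

lemma cast_shifted_mul_vandermondeProd_update_eq_zero (hn : Antitone n) {j : Fin d}
    (hj : ¬IsRemovableRow n j) :
    (shifted n j : ℚ) *
      vandermondeProd (Function.update (fun i => (shifted n i : ℚ)) j (shifted n j - 1)) = 0 := by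
  by_cases hlast : (j : ℕ) + 1 < d
  · set k : Fin d := ⟨j + 1, hlast⟩
    have hjk : j < k := Fin.lt_def.mpr (by simp [k])
    have hnk : n k = n j := by
      by_contra hne
      have hlt : n k < n j := lt_of_le_of_ne (hn hjk.le) hne
      exact hj ⟨by omega, fun k' hk' => (Fin.ext hk' : k' = k) ▸ hlt⟩
    refine mul_eq_zero_of_right _ (vandermondeProd_eq_zero hjk ?_)
    have hshift : shifted n j = shifted n k + 1 := by
      simp only [shifted, hnk, k]
      omega
    rw [Function.update_self, Function.update_of_ne hjk.ne', hshift]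
    push_cast
    ring
  · refine mul_eq_zero_of_left ?_ _
    have hnj : n j = 0 := by
      by_contra h
      exact hj ⟨Nat.pos_of_ne_zero h, fun k hk => absurd k.isLt (by omega)⟩
    simp only [shifted, hnj, Nat.cast_eq_zero]
    omega

lemma hookFormula_eq_sum (hn : Antitone n) (hsum : ∑ i, n i = m + 1) :
    hookFormula n =
      ∑ j, if IsRemovableRow n j then hookFormula (Function.update n j (n j - 1)) else 0 := by
  have hinj : Function.Injective (fun i => (shifted n i : ℚ)) :=
    Nat.cast_injective.comp (shifted_strictAnti hn).injective
  have hS : ∑ i, (shifted n i : ℚ) - d.choose 2 = m + 1 := by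
    rw [← Nat.cast_sum, sum_shifted, hsum]
    push_cast
    ring
  have hterm : ∀ j, (if IsRemovableRow n j then hookFormula (Function.update n j (n j - 1))
      else 0) = (shifted n j : ℚ) * vandermondeProd (Function.update (fun i => (shifted n i : ℚ))
        j (shifted n j - 1)) * m ! / ∏ i, ((shifted n i)! : ℚ) := by
    intro j
    split_ifs with hj
    · exact hookFormula_update_sub_one hj hsum
    · rw [cast_shifted_mul_vandermondeProd_update_eq_zero hn hj, zero_mul, zero_div]
  rw [sum_congr rfl fun j _ => hterm j, ← sum_div, ← sum_mul,
    sum_mul_vandermondeProd_update_sub_one hinj, hS, hookFormula, hsum, Nat.factorial_succ]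
  push_cast
  ring

theorem ballotWalks_eq_hookFormula (hn : Antitone n) : (ballotWalks d n : ℚ) = hookFormula n := by
  suffices ∀ m (n : Fin d → ℕ), Antitone n → ∑ i, n i = m →
      (Nat.card {g : Fin m → Fin d // IsBallotWalk n g} : ℚ) = hookFormula n by
    rw [ballotWalks_eq_card rfl]
    exact this _ n hn rfl
  intro m
  induction m with
  | zero =>
    intro n hn hsum
    obtain rfl : n = 0 := funext fun i => sum_eq_zero_iff.mp hsum i (mem_univ i)
    rw [hookFormula_zero, card_isBallotWalk_zero, Nat.cast_one]
  | succ m ih =>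
    intro n hn hsum
    rw [card_isBallotWalk_succ hn, hookFormula_eq_sum hn hsum, Nat.cast_sum]
    refine sum_congr rfl fun j _ => ?_
    split_ifs with hj
    · exact ih _ (hj.antitone_update hn) (sum_update_sub_one hj.1 hsum)
    · rfl

end HookFormula

/-- The Young–Frobenius–MacMahon hook-type product formula for the number of standard
Young tableaux of shape `(n₁ ≥ n₂ ≥ ... ≥ n_d ≥ 0)`. -/
theorem young_frobenius_macmahon (d : ℕ) (n : Fin d → ℕ)
    (hmono : ∀ i j : Fin d, i ≤ j → n j ≤ n i) :
    (ballotWalks d n : ℚ) =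
      (∏ p ∈ Finset.univ.filter (fun p : Fin d × Fin d => p.1 < p.2),
          ((n p.1 : ℚ) - (n p.2 : ℚ) + (p.2 : ℕ) - (p.1 : ℕ))) *
        (Nat.factorial (∑ i, n i) : ℚ) /
          ∏ i : Fin d, (Nat.factorial (n i + (d - 1 - (i : ℕ))) : ℚ) := by
  rw [ballotWalks_eq_hookFormula fun i j h => hmono i j h, hookFormula,
    vandermondeProd_eq_prod_filter]
  congr 2
  refine prod_congr rfl fun p hp => ?_
  have hlt : (p.1 : ℕ) < p.2 := (mem_filter.mp hp).2
  have hsplit : d - 1 - (p.1 : ℕ) = (d - 1 - p.2) + (p.2 - p.1) := by omega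
  simp only [shifted, hsplit]
  push_cast [Nat.cast_sub hlt.le]
  ring
end

section
/- The number of lattice walks of length 2n in the quarter plane starting and ending at the origin using the step set S = {(0,1),(1,1),(-1,-1)} equals 4^n (1/2)_n / (1)_{n+1}, i.e., the Catalan number C(2n,n)/(n+1). -/
/-!
For a step `(a, b)` of `S` the quantity `b - a` is nonnegative and vanishes only on the
diagonal steps `±(1, 1)`; since it sums to `0` along a closed walk, a closed walk uses only
`(1, 1)` and `(-1, -1)`. Along such a walk both coordinates equal the height of the
corresponding `U`/`D` word, so the closed quarter-plane walks of length `2n` are exactly the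
Dyck words of semilength `n`, counted by the Catalan number.
-/

open Finset

/-- Number of quarter-plane walks of length `m` from `(0,0)` to `e` with steps in `S`:
sequences of `m` steps, each in `S`, all partial sums having nonnegative coordinates,
with total sum `e`. -/
noncomputable def qpWalks (S : Set (ℤ × ℤ)) (m : ℕ) (e : ℤ × ℤ) : ℕ :=
  Nat.card {f : Fin m → ℤ × ℤ //
    (∀ i, f i ∈ S) ∧
    (∀ k : ℕ,
      0 ≤ (∑ i ∈ Finset.univ.filter (fun i : Fin m => (i : ℕ) < k), f i).1 ∧
      0 ≤ (∑ i ∈ Finset.univ.filter (fun i : Fin m => (i : ℕ) < k), f i).2) ∧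
    (∑ i, f i) = e}

open scoped Nat
open DyckStep

def IsQPWalk (S : Set (ℤ × ℤ)) (m : ℕ) (e : ℤ × ℤ) (f : Fin m → ℤ × ℤ) : Prop :=
  (∀ i, f i ∈ S) ∧
    (∀ k : ℕ,
      0 ≤ (∑ i ∈ Finset.univ.filter (fun i : Fin m => (i : ℕ) < k), f i).1 ∧
      0 ≤ (∑ i ∈ Finset.univ.filter (fun i : Fin m => (i : ℕ) < k), f i).2) ∧
    (∑ i, f i) = e

theorem qpWalks_eq_card (S : Set (ℤ × ℤ)) (m : ℕ) (e : ℤ × ℤ) :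
    qpWalks S m e = Nat.card {f // IsQPWalk S m e f} := rfl


namespace DyckStep

def toVec : DyckStep → ℤ × ℤ
  | U => (1, 1)
  | D => (-1, -1)

theorem toVec_mem (s : DyckStep) : toVec s ∈ ({(0, 1), (1, 1), (-1, -1)} : Set (ℤ × ℤ)) := by
  cases s <;> simp [toVec]

theorem toVec_injective : Function.Injective toVec := by
  rintro (_ | _) (_ | _) h <;> simp_all [toVec]

theorem sum_map_toVec (l : List DyckStep) :
    (l.map toVec).sum = ((l.count U : ℤ) - l.count D, (l.count U : ℤ) - l.count D) := by
  induction l with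
  | nil => rfl
  | cons s l ih => cases s <;> simp [ih, toVec] <;> ring

end DyckStep

theorem exists_toVec_eq_of_sum_eq_zero {m : ℕ} {f : Fin m → ℤ × ℤ}
    (hS : ∀ i, f i ∈ ({(0, 1), (1, 1), (-1, -1)} : Set (ℤ × ℤ))) (hsum : ∑ i, f i = (0, 0))
    (i : Fin m) : ∃ s, toVec s = f i := by
  have hdiff_nonneg : ∀ j ∈ univ, 0 ≤ (f j).2 - (f j).1 := by
    intro j _
    rcases hS j with h | h | h <;> simp_all
  have hdiff_sum : ∑ j, ((f j).2 - (f j).1) = 0 := by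
    rw [sum_sub_distrib, ← Prod.snd_sum, ← Prod.fst_sum, hsum, sub_self]
  have hdiff := (sum_eq_zero_iff_of_nonneg hdiff_nonneg).mp hdiff_sum i (mem_univ i)
  rcases hS i with h | h | h
  · simp [h] at hdiff
  · exact ⟨U, h.symm⟩
  · exact ⟨D, (Set.mem_singleton_iff.mp h).symm⟩

theorem isQPWalk_iff_of_ofFn_eq_map_toVec {S : Set (ℤ × ℤ)} (hS : ∀ s, toVec s ∈ S) {m : ℕ}
    {f : Fin m → ℤ × ℤ} {l : List DyckStep} (hfl : List.ofFn f = l.map toVec) :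
    IsQPWalk S m (0, 0) f ↔
      l.count U = l.count D ∧ ∀ k, (l.take k).count D ≤ (l.take k).count U := by
  have hprefix (k : ℕ) : ∑ i ∈ univ.filter (fun i : Fin m => (i : ℕ) < k), f i =
      (((l.take k).count U : ℤ) - (l.take k).count D,
        ((l.take k).count U : ℤ) - (l.take k).count D) := by
    rw [← List.sum_take_ofFn, hfl, ← List.map_take, sum_map_toVec]
  have htotal : ∑ i, f i = ((l.count U : ℤ) - l.count D, (l.count U : ℤ) - l.count D) := by
    rw [← List.sum_ofFn, hfl, sum_map_toVec]
  have hmem : ∀ i, f i ∈ S := by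
    intro i
    have : f i ∈ List.ofFn f := List.mem_ofFn.mpr ⟨i, rfl⟩
    rw [hfl, List.mem_map] at this
    obtain ⟨s, -, hs⟩ := this
    exact hs ▸ hS s
  simp only [IsQPWalk, hprefix, htotal, Prod.mk_zero_zero, Prod.mk_eq_zero, and_self, sub_nonneg,
    sub_eq_zero, Nat.cast_le, Nat.cast_inj, hmem, implies_true, true_and]
  exact and_comm

theorem ofFn_getD {α : Type*} {l : List α} {m : ℕ} (h : l.length = m) (d : α) :
    List.ofFn (fun i : Fin m => l.getD i d) = l := by
  subst h
  simp

theorem exists_dyckWord_ofFn_eq_map_toVec {m : ℕ} {f : Fin m → ℤ × ℤ}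
    (hf : IsQPWalk {(0, 1), (1, 1), (-1, -1)} m (0, 0) f) :
    ∃ p : DyckWord, List.ofFn f = p.toList.map toVec := by
  choose g hg using exists_toVec_eq_of_sum_eq_zero hf.1 hf.2.2
  have hfg : List.ofFn f = (List.ofFn g).map toVec := by
    rw [List.map_ofFn]
    exact congrArg List.ofFn (funext fun i => (hg i).symm)
  obtain ⟨hbal, hprefix⟩ := (isQPWalk_iff_of_ofFn_eq_map_toVec toVec_mem hfg).mp hf
  exact ⟨⟨List.ofFn g, hbal, hprefix⟩, hfg⟩

theorem qpWalks_diag_eq_catalan (n : ℕ) :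
    qpWalks {(0, 1), (1, 1), (-1, -1)} (2 * n) (0, 0) = catalan n := by
  let steps (p : {p : DyckWord // p.semilength = n}) : Fin (2 * n) → ℤ × ℤ :=
    fun i => toVec (p.1.toList.getD i U)
  have hsteps (p) : List.ofFn (steps p) = p.1.toList.map toVec := by
    have hlen : p.1.toList.length = 2 * n := by rw [← p.1.two_mul_semilength_eq_length, p.2]
    rw [← ofFn_getD hlen U, List.map_ofFn]
    rfl
  rw [qpWalks_eq_card, ← DyckWord.card_dyckWord_semilength_eq_catalan, ← Nat.card_eq_fintype_card]
  refine (Nat.card_eq_of_bijective (fun p => ⟨steps p, (isQPWalk_iff_of_ofFn_eq_map_toVec toVec_mem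
    (hsteps p)).mpr ⟨p.1.count_U_eq_count_D, p.1.count_D_le_count_U⟩⟩) ⟨?_, ?_⟩).symm
  · intro p q hpq
    have hmap := congrArg (fun w => List.ofFn w.1) hpq
    simp only [hsteps] at hmap
    exact Subtype.ext (DyckWord.ext (List.map_injective_iff.mpr toVec_injective hmap))
  · rintro ⟨f, hf⟩
    obtain ⟨p, hfp⟩ := exists_dyckWord_ofFn_eq_map_toVec hf
    have hp : p.semilength = n := by
      have := p.two_mul_semilength_eq_length
      rw [← List.length_map toVec, ← hfp, List.length_ofFn] at this
      omega
    exact ⟨⟨p, hp⟩, Subtype.ext (List.ofFn_injective (by rw [hsteps, hfp]))⟩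

theorem factorial_mul_four_pow_mul_ascPochhammer_eval_half {K : Type*} [Field K] [CharZero K]
    (n : ℕ) : (n ! : K) * (4 ^ n * (ascPochhammer K n).eval (1 / 2)) = (2 * n)! := by
  induction n with
  | zero => simp
  | succ n ih =>
    rw [ascPochhammer_succ_eval, show 2 * (n + 1) = 2 * n + 1 + 1 by ring, Nat.factorial_succ,
      Nat.factorial_succ, Nat.factorial_succ]
    push_cast
    rw [← ih]
    field_simp
    ring

theorem catalan_eq_choose_div {K : Type*} [DivisionRing K] [CharZero K] (n : ℕ) :
    (catalan n : K) = (2 * n).choose n / (n + 1) := by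
  rw [eq_div_iff (Nat.cast_add_one_ne_zero n), ← Nat.cast_succ, ← Nat.cast_mul, mul_comm]
  exact congrArg _ (succ_mul_catalan_eq_centralBinom n)

theorem catalan_eq_four_pow_mul_ascPochhammer_eval_half_div {K : Type*} [Field K] [CharZero K]
    (n : ℕ) : (catalan n : K) = 4 ^ n * (ascPochhammer K n).eval (1 / 2) / (n + 1)! := by
  rw [catalan_eq_choose_div, Nat.cast_choose K (by omega : n ≤ 2 * n), two_mul, Nat.add_sub_cancel,
    ← two_mul, ← factorial_mul_four_pow_mul_ascPochhammer_eval_half, Nat.factorial_succ]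
  push_cast
  field_simp

theorem closed_walks_step_set_2 (n : ℕ) :
    (qpWalks {(0,1), (1,1), (-1,-1)} (2 * n) (0, 0) : ℚ) =
        4 ^ n * (ascPochhammer ℚ n).eval (1/2) / (ascPochhammer ℚ (n + 1)).eval 1 ∧
    (qpWalks {(0,1), (1,1), (-1,-1)} (2 * n) (0, 0) : ℚ) =
        ((2 * n).choose n : ℚ) / (n + 1) := by
  rw [qpWalks_diag_eq_catalan, ascPochhammer_eval_one]
  exact ⟨catalan_eq_four_pow_mul_ascPochhammer_eval_half_div n, catalan_eq_choose_div n⟩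
end

section
/- For n ≥ 1, the number of closed quarter-plane walks of length 3n with step set S = {(-1,0),(0,1),(1,-1)} equals 27^{n-1}(4/3)_{n-1}(5/3)_{n-1} / ((3)_{n-1}(4)_{n-1}), and closed walks exist only for lengths divisible by 3. -/
open Finset

/-! Read a three-row Young diagram with rows `a ≥ b ≥ c` as the point `(b - c, a - b)`: the steps
`(0,1)`, `(1,-1)`, `(-1,0)` add a box to the first, second, third row. Walks of length `m` from the
origin to `(b - c, a - b)` are therefore standard Young tableaux of shape `(a, b, c)`, counted by
the hook length formula. That formula is checked directly against the walks: it satisfies their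
recurrence on the last step (the branching rule) and vanishes just outside the Weyl chamber, where
the walks leave the quarter plane. Closed walks of length `3n` are tableaux of shape `(n, n, n)`;
closed walks have length divisible by `3` because every step changes `x - y` by `-1` modulo `3`. -/

namespace QuarterPlaneWalk

def prefixSum {m : ℕ} (f : Fin m → ℤ × ℤ) (k : ℕ) : ℤ × ℤ :=
  ∑ i ∈ univ.filter (fun i : Fin m => (i : ℕ) < k), f i

def IsQPWalk (S : Set (ℤ × ℤ)) {m : ℕ} (e : ℤ × ℤ) (f : Fin m → ℤ × ℤ) : Prop :=
  (∀ i, f i ∈ S) ∧ (∀ k, 0 ≤ prefixSum f k) ∧ ∑ i, f i = e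

theorem qpWalks_eq_card (S : Set (ℤ × ℤ)) (m : ℕ) (e : ℤ × ℤ) :
    qpWalks S m e = Nat.card {f : Fin m → ℤ × ℤ // IsQPWalk S e f} := rfl

instance (S : Finset (ℤ × ℤ)) (m : ℕ) (e : ℤ × ℤ) :
    Finite {f : Fin m → ℤ × ℤ // IsQPWalk S e f} :=
  Finite.of_injective (fun f i => (⟨f.1 i, f.2.1 i⟩ : S))
    fun _ _ h => Subtype.ext <| funext fun i => congrArg Subtype.val (congrFun h i)

theorem prefixSum_of_le {m k : ℕ} (f : Fin m → ℤ × ℤ) (h : m ≤ k) :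
    prefixSum f k = ∑ i, f i := by
  rw [prefixSum, filter_true_of_mem fun (i : Fin m) _ => i.isLt.trans_le h]

theorem prefixSum_snoc {m : ℕ} (g : Fin m → ℤ × ℤ) (s : ℤ × ℤ) (k : ℕ) :
    prefixSum (Fin.snoc g s : Fin (m + 1) → ℤ × ℤ) k = prefixSum g k + if m < k then s else 0 := by
  simp [prefixSum, sum_filter, Fin.sum_univ_castSucc]

theorem forall_nonneg_prefixSum_snoc_iff {m : ℕ} {g : Fin m → ℤ × ℤ} {s : ℤ × ℤ} :
    (∀ k, 0 ≤ prefixSum (Fin.snoc g s : Fin (m + 1) → ℤ × ℤ) k) ↔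
      (∀ k, 0 ≤ prefixSum g k) ∧ 0 ≤ ∑ i, g i + s := by
  constructor
  · intro h
    refine ⟨fun k => ?_, ?_⟩
    · rcases le_or_gt k m with hk | hk
      · simpa [prefixSum_snoc, hk.not_gt] using h k
      · simpa [prefixSum_snoc, prefixSum_of_le g hk.le, prefixSum_of_le g le_rfl] using h m
    · simpa [prefixSum_snoc, prefixSum_of_le g m.le_succ] using h (m + 1)
  · rintro ⟨hg, he⟩ k
    rw [prefixSum_snoc]
    split_ifs with hk
    · rwa [prefixSum_of_le g hk.le]
    · simpa using hg k

theorem isQPWalk_snoc_iff {S : Set (ℤ × ℤ)} {m : ℕ} {e s : ℤ × ℤ} {g : Fin m → ℤ × ℤ} :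
    IsQPWalk S e (Fin.snoc g s : Fin (m + 1) → ℤ × ℤ) ↔ s ∈ S ∧ IsQPWalk S (e - s) g ∧ 0 ≤ e := by
  simp only [IsQPWalk, Fin.forall_fin_succ', Fin.snoc_castSucc, Fin.snoc_last,
    forall_nonneg_prefixSum_snoc_iff, Fin.sum_snoc, ← eq_sub_iff_add_eq]
  constructor
  · rintro ⟨⟨hg, hs⟩, ⟨hpos, hnn⟩, hsum⟩
    refine ⟨hs, ⟨hg, hpos, hsum⟩, ?_⟩
    simpa [hsum] using hnn
  · rintro ⟨hs, ⟨hg, hpos, hsum⟩, he⟩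
    exact ⟨⟨hg, hs⟩, ⟨hpos, by simpa [hsum] using he⟩, hsum⟩

def walkSnocEquiv (S : Set (ℤ × ℤ)) (m : ℕ) {e : ℤ × ℤ} (he : 0 ≤ e) :
    {f : Fin (m + 1) → ℤ × ℤ // IsQPWalk S e f} ≃
      Σ s : S, {g : Fin m → ℤ × ℤ // IsQPWalk S (e - s) g} where
  toFun f :=
    have hf := isQPWalk_snoc_iff.1 ((Fin.snoc_init_self f.1).symm ▸ f.2)
    ⟨⟨f.1 (Fin.last m), hf.1⟩, ⟨Fin.init f.1, hf.2.1⟩⟩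
  invFun g := ⟨Fin.snoc g.2.1 g.1, isQPWalk_snoc_iff.2 ⟨g.1.2, g.2.2, he⟩⟩
  left_inv f := Subtype.ext (Fin.snoc_init_self f.1)
  right_inv _ := Sigma.subtype_ext (Subtype.ext (Fin.snoc_last (α := fun _ => ℤ × ℤ) _ _))
    (Fin.init_snoc (α := fun _ => ℤ × ℤ) _ _)

theorem qpWalks_succ (S : Finset (ℤ × ℤ)) (m : ℕ) {e : ℤ × ℤ} (he : 0 ≤ e) :
    qpWalks S (m + 1) e = ∑ s ∈ S, qpWalks S m (e - s) := by
  rw [qpWalks_eq_card, Nat.card_congr (walkSnocEquiv S m he), Nat.card_sigma]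
  exact sum_coe_sort S fun s => qpWalks S m (e - s)

theorem qpWalks_eq_zero_of_not_nonneg (S : Set (ℤ × ℤ)) (m : ℕ) {e : ℤ × ℤ} (he : ¬ 0 ≤ e) :
    qpWalks S m e = 0 := by
  rw [qpWalks_eq_card, Nat.card_eq_zero]
  left
  exact ⟨fun ⟨f, _, hpos, hsum⟩ => he <| by
    simpa [prefixSum_of_le f le_rfl, hsum] using hpos m⟩

theorem qpWalks_length_zero (S : Set (ℤ × ℤ)) (e : ℤ × ℤ) :
    qpWalks S 0 e = if e = 0 then 1 else 0 := by
  have : ∀ f : Fin 0 → ℤ × ℤ, IsQPWalk S e f ↔ e = 0 := fun f => by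
    simp [IsQPWalk, prefixSum, eq_comm]
  simp only [qpWalks_eq_card, this]
  split_ifs with he <;> simp [he]

theorem qpWalks_eq_zero_of_map_ne {G : Type*} [AddCommMonoid G] (S : Set (ℤ × ℤ)) (m : ℕ)
    {e : ℤ × ℤ} (φ : ℤ × ℤ →+ G) (r : G) (hS : ∀ s ∈ S, φ s = r) (he : φ e ≠ m • r) :
    qpWalks S m e = 0 := by
  rw [qpWalks_eq_card, Nat.card_eq_zero]
  left
  exact ⟨fun ⟨f, hS', _, hsum⟩ => he <| by
    simp [← hsum, map_sum, fun i => hS _ (hS' i)]⟩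

open Nat

/-- `1 / n!`, extended by `0` to negative `n` so that `invFactorial_sub_one` holds on all of `ℤ`. -/
def invFactorial (n : ℤ) : ℚ := if n < 0 then 0 else ((n.toNat)! : ℚ)⁻¹

theorem invFactorial_of_neg {n : ℤ} (h : n < 0) : invFactorial n = 0 := if_pos h

theorem invFactorial_natCast (n : ℕ) : invFactorial n = ((n)! : ℚ)⁻¹ := by
  simp [invFactorial]

theorem invFactorial_sub_one (n : ℤ) : invFactorial (n - 1) = n * invFactorial n := by
  obtain ⟨k, rfl | rfl⟩ := Int.eq_nat_or_neg n
  · cases k with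
    | zero => simp [invFactorial_of_neg]
    | succ k =>
      rw [show ((k + 1 : ℕ) : ℤ) - 1 = k by push_cast; ring, invFactorial_natCast,
        invFactorial_natCast, factorial_succ]
      push_cast
      field_simp
  · rw [invFactorial_of_neg (by omega)]
    rcases k.eq_zero_or_pos with rfl | hk
    · simp
    · rw [invFactorial_of_neg (by omega), mul_zero]

/-- For `0 ≤ c ≤ b ≤ a`, `(a + b + c)! * hookWeight a b c` is the hook length formula for the
number of standard Young tableaux of shape `(a, b, c)`. -/
def hookWeight (a b c : ℤ) : ℚ :=
  (a - b + 1) * (b - c + 1) * (a - c + 2) *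
    invFactorial (a + 2) * invFactorial (b + 1) * invFactorial c

theorem hookWeight_branching (a b c : ℤ) :
    (a + b + c) * hookWeight a b c =
      hookWeight (a - 1) b c + hookWeight a (b - 1) c + hookWeight a b (c - 1) := by
  simp only [hookWeight, show a - 1 + 2 = a + 2 - 1 by ring, show b - 1 + 1 = b + 1 - 1 by ring,
    invFactorial_sub_one]
  push_cast
  ring

theorem hookWeight_eq_zero {a b c : ℤ} (h : c < 0 ∨ c = b + 1 ∨ b = a + 1) :
    hookWeight a b c = 0 := by
  rcases h with h | rfl | rfl
  · simp [hookWeight, invFactorial_of_neg h]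
  · simp [hookWeight]
  · simp [hookWeight]

theorem hookWeight_diag (n : ℕ) :
    hookWeight n n n = 2 * (((n + 2)! * (n + 1)! * n ! : ℕ) : ℚ)⁻¹ := by
  simp only [hookWeight, sub_self, ← Nat.cast_ofNat (R := ℤ), ← Nat.cast_one (R := ℤ),
    ← Nat.cast_add, invFactorial_natCast]
  push_cast
  ring

theorem hookWeight_zero : hookWeight 0 0 0 = 1 := by
  simpa [factorial] using hookWeight_diag 0

theorem factorial_mul_hookWeight_diag (k : ℕ) :
    ((3 * (k + 1))! : ℚ) * hookWeight (k + 1 : ℕ) (k + 1 : ℕ) (k + 1 : ℕ) =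
      27 ^ k * (ascPochhammer ℚ k).eval (4 / 3) * (ascPochhammer ℚ k).eval (5 / 3) /
        ((ascPochhammer ℚ k).eval 3 * (ascPochhammer ℚ k).eval 4) := by
  induction k with
  | zero =>
    rw [hookWeight_diag]
    norm_num [factorial]
  | succ k ih =>
    have h3 := (ascPochhammer_pos k (3 : ℚ) (by norm_num)).ne'
    have h4 := (ascPochhammer_pos k (4 : ℚ) (by norm_num)).ne'
    have hstep : 27 ^ (k + 1) * (ascPochhammer ℚ (k + 1)).eval (4 / 3) *
          (ascPochhammer ℚ (k + 1)).eval (5 / 3) /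
          ((ascPochhammer ℚ (k + 1)).eval 3 * (ascPochhammer ℚ (k + 1)).eval 4) =
        27 ^ k * (ascPochhammer ℚ k).eval (4 / 3) * (ascPochhammer ℚ k).eval (5 / 3) /
          ((ascPochhammer ℚ k).eval 3 * (ascPochhammer ℚ k).eval 4) *
          ((3 * k + 4) * (3 * k + 5) * (3 * k + 6) / ((k + 2) * (k + 3) * (k + 4))) := by
      simp only [ascPochhammer_succ_eval]
      field_simp
      ring
    rw [hstep, ← ih, hookWeight_diag, hookWeight_diag,
      show 3 * (k + 1 + 1) = 3 * (k + 1) + 2 + 1 by ring]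
    simp only [factorial_succ]
    push_cast
    field_simp
    ring

def tableauSteps : Finset (ℤ × ℤ) := {(-1, 0), (0, 1), (1, -1)}

theorem sum_tableauSteps {M : Type*} [AddCommMonoid M] (g : ℤ × ℤ → M) :
    ∑ s ∈ tableauSteps, g s = g (-1, 0) + g (0, 1) + g (1, -1) := by
  rw [tableauSteps, sum_insert (by decide), sum_insert (by decide), sum_singleton, add_assoc]

/-- The walls `c = b + 1` and `b = a + 1` are allowed so that the induction hypothesis covers all
three predecessors of a point of the chamber. -/
theorem qpWalks_tableauSteps (m : ℕ) (a b c : ℤ) (habc : a + b + c = m) (hcb : c ≤ b + 1)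
    (hba : b ≤ a + 1) :
    (qpWalks tableauSteps m (b - c, a - b) : ℚ) = m ! * hookWeight a b c := by
  induction m generalizing a b c with
  | zero =>
    rw [qpWalks_length_zero]
    by_cases h : a = 0 ∧ b = 0 ∧ c = 0
    · obtain ⟨rfl, rfl, rfl⟩ := h
      simp [hookWeight_zero]
    · rw [if_neg (by simp [Prod.ext_iff]; omega), hookWeight_eq_zero (by omega)]
      simp
  | succ m ih =>
    push_cast at habc
    by_cases hq : c ≤ b ∧ b ≤ a
    · rw [qpWalks_succ _ _ (Prod.mk_le_mk.2 ⟨by omega, by omega⟩), sum_tableauSteps,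
        show (b - c, a - b) - (-1, 0) = (b - (c - 1), a - b) by rw [Prod.mk_sub_mk]; ring_nf,
        show (b - c, a - b) - (0, 1) = (b - c, (a - 1) - b) by rw [Prod.mk_sub_mk]; ring_nf,
        show (b - c, a - b) - (1, -1) = ((b - 1) - c, a - (b - 1)) by rw [Prod.mk_sub_mk]; ring_nf]
      push_cast
      rw [ih a b (c - 1) (by omega) (by omega) (by omega),
        ih (a - 1) b c (by omega) (by omega) (by omega),
        ih a (b - 1) c (by omega) (by omega) (by omega)]
      have hsum : (a + b + c : ℚ) = m + 1 := by exact_mod_cast habc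
      rw [factorial_succ]
      push_cast
      linear_combination
        -(m ! : ℚ) * hookWeight_branching a b c + (m ! : ℚ) * hookWeight a b c * hsum
    · rw [qpWalks_eq_zero_of_not_nonneg _ _ fun ⟨h1, h2⟩ => hq (by simp at h1 h2; omega),
        hookWeight_eq_zero (by omega)]
      simp

end QuarterPlaneWalk

open QuarterPlaneWalk

theorem closed_walks_step_set_7 :
    (∀ n : ℕ, 1 ≤ n →
      (qpWalks {(-1,0), (0,1), (1,-1)} (3 * n) (0, 0) : ℚ) =
        27 ^ (n - 1) * (ascPochhammer ℚ (n - 1)).eval (4/3) *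
            (ascPochhammer ℚ (n - 1)).eval (5/3) /
          ((ascPochhammer ℚ (n - 1)).eval 3 * (ascPochhammer ℚ (n - 1)).eval 4)) ∧
    (∀ m : ℕ, ¬ (3 ∣ m) → qpWalks {(-1,0), (0,1), (1,-1)} m (0, 0) = 0) := by
  have hsteps : ({(-1,0), (0,1), (1,-1)} : Set (ℤ × ℤ)) = tableauSteps := by
    simp [tableauSteps]
  rw [hsteps]
  refine ⟨fun n hn => ?_, fun m hm => ?_⟩
  · obtain ⟨k, rfl⟩ := Nat.exists_eq_add_of_le' hn
    have h := qpWalks_tableauSteps (3 * (k + 1)) (k + 1 : ℕ) (k + 1 : ℕ) (k + 1 : ℕ)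
      (by push_cast; ring) (by omega) (by omega)
    rw [sub_self] at h
    rw [h, Nat.add_sub_cancel, factorial_mul_hookWeight_diag]
  · let ψ : ℤ × ℤ →+ ZMod 3 :=
      (Int.castAddHom (ZMod 3)).comp (AddMonoidHom.fst ℤ ℤ - AddMonoidHom.snd ℤ ℤ)
    refine qpWalks_eq_zero_of_map_ne _ m ψ (-1) (fun s hs => ?_) ?_
    · simp [tableauSteps] at hs
      rcases hs with rfl | rfl | rfl <;> decide
    · simpa [ψ, ZMod.natCast_eq_zero_iff] using hm
end

section
/- For n ≥ 1, the number of closed quarter-plane walks of length 4n with step set S = {(0,1),(-1,-1),(1,-1)} equals 2·64^{n-1}(5/4)_{n-1}(3/2)_{n-1}(7/4)_{n-1} / ((2)_{n-1}(5/2)_{n-1}(3)_{n-1}), and closed walks exist only for lengths divisible by 4. -/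
open Finset

/-!
Encode the steps `(0,1)`, `(1,-1)`, `(-1,-1)` as `none`, `some U`, `some D`. The second
coordinate of a walk only sees whether a step goes up or down, so it is a Dyck path of length
`m`; the first coordinate only moves on the `m / 2` down steps, and read along them it is again a
Dyck path. Interleaving the two paths inverts this, so closed walks of length `4n` are in
bijection with pairs of Dyck paths of semilengths `2n` and `n`, and their number is
`C_{2n} C_n`. The hypergeometric form follows since both sides have the same term ratio.
-/

theorem Nat.card_list_forall_mem_range {α β : Type*} {e : α → β} (he : Function.Injective e)
    (P : List β → Prop) :
    Nat.card {l : List β // (∀ x ∈ l, x ∈ Set.range e) ∧ P l} =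
      Nat.card {w : List α // P (w.map e)} := by
  symm
  refine Nat.card_eq_of_bijective (fun w => ⟨w.1.map e, by simp, w.2⟩) ⟨?_, ?_⟩
  · intro w w' h
    exact Subtype.ext (List.map_injective_iff.mpr he (congrArg Subtype.val h))
  · rintro ⟨l, hrange, hP⟩
    obtain ⟨w, rfl⟩ : l ∈ Set.range (List.map e) := by rwa [Set.range_list_map]
    exact ⟨⟨w, hP⟩, rfl⟩

theorem List.forall_reduceOption_take_iff {β : Type*} (P : List β → Prop)
    (w : List (Option β)) :
    (∀ k, P (w.take k).reduceOption) ↔ ∀ j, P (w.reduceOption.take j) := by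
  constructor
  · intro h j
    obtain ⟨w₁, w₂, rfl, hw₁, -⟩ := (List.reduceOption_eq_append_iff w _ _).mp
      (List.take_append_drop j w.reduceOption).symm
    simpa [← hw₁] using h w₁.length
  · intro h k
    rw [List.prefix_iff_eq_take.mp ((List.take_prefix k w).reduceOption)]
    exact h _

namespace QuarterPlane

open DyckStep

def IsWalkTo (e : ℤ × ℤ) (l : List (ℤ × ℤ)) : Prop :=
  (∀ k, 0 ≤ (l.take k).sum.1 ∧ 0 ≤ (l.take k).sum.2) ∧ l.sum = e

theorem qpWalks_eq_card_list (S : Set (ℤ × ℤ)) (m : ℕ) (e : ℤ × ℤ) :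
    qpWalks S m e =
      Nat.card {l : List (ℤ × ℤ) //
        (∀ s ∈ l, s ∈ S) ∧ l.length = m ∧ IsWalkTo e l} := by
  refine Nat.card_eq_of_bijective (fun f => ⟨List.ofFn f.1, ?_⟩) ⟨?_, ?_⟩
  · obtain ⟨f, hS, hprefix, hsum⟩ := f
    refine ⟨by simpa using hS, List.length_ofFn, fun k => ?_, by rwa [List.sum_ofFn]⟩
    rw [List.sum_take_ofFn]
    exact hprefix k
  · intro f f' h
    exact Subtype.ext (List.ofFn_injective (congrArg Subtype.val h))
  · rintro ⟨l, hS, rfl, hprefix, hsum⟩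
    refine ⟨⟨fun i => l[i], fun i => hS _ (List.getElem_mem _), fun k => ?_, ?_⟩, ?_⟩
    · simpa [← List.sum_take_ofFn] using hprefix k
    · simpa [← List.sum_ofFn] using hsum
    · simp

def excess (l : List DyckStep) : ℤ := l.count U - l.count D

theorem excess_cons_U (l : List DyckStep) : excess (U :: l) = excess l + 1 := by
  rw [excess, excess, List.count_cons_self, List.count_cons_of_ne (by decide)]
  push_cast
  ring

theorem excess_cons_D (l : List DyckStep) : excess (D :: l) = excess l - 1 := by
  rw [excess, excess, List.count_cons_self, List.count_cons_of_ne (by decide)]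
  push_cast
  ring

def IsDyck (l : List DyckStep) : Prop :=
  l.count U = l.count D ∧ ∀ i, (l.take i).count D ≤ (l.take i).count U

theorem isDyck_iff_excess (l : List DyckStep) :
    IsDyck l ↔ excess l = 0 ∧ ∀ i, 0 ≤ excess (l.take i) := by
  simp only [IsDyck, excess, sub_eq_zero, sub_nonneg, Nat.cast_inj, Nat.cast_le]

theorem IsDyck.two_mul_count_U {l : List DyckStep} (h : IsDyck l) : 2 * l.count U = l.length :=
  (⟨l, h.1, h.2⟩ : DyckWord).two_mul_semilength_eq_length

theorem _root_.DyckWord.isDyck (p : DyckWord) : IsDyck p.toList :=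
  ⟨p.count_U_eq_count_D, p.count_D_le_count_U⟩

section Interleave

variable {β : Type*}

def vertical : Option β → DyckStep
  | none => U
  | some _ => D

def interleave : List DyckStep → List β → List (Option β)
  | [], _ => []
  | U :: v, h => none :: interleave v h
  | D :: _, [] => []
  | D :: v, b :: h => some b :: interleave v h

theorem map_vertical_interleave :
    ∀ (v : List DyckStep) (h : List β), h.length = v.count D →
      (interleave v h).map vertical = v
  | [], _, _ => rfl
  | U :: v, h, hl => by
    simp only [interleave, List.map_cons, vertical, List.cons.injEq, true_and]
    exact map_vertical_interleave v h (by simpa using hl)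
  | D :: v, [], hl => by simp at hl
  | D :: v, b :: h, hl => by
    simp only [interleave, List.map_cons, vertical, List.cons.injEq, true_and]
    exact map_vertical_interleave v h (by simpa using hl)

theorem reduceOption_interleave :
    ∀ (v : List DyckStep) (h : List β), h.length = v.count D →
      (interleave v h).reduceOption = h
  | [], _, hl => (List.length_eq_zero_iff.mp hl).symm
  | U :: v, h, hl => by
    rw [interleave, List.reduceOption_cons_of_none]
    exact reduceOption_interleave v h (by simpa using hl)
  | D :: v, [], hl => by simp at hl
  | D :: v, b :: h, hl => by
    rw [interleave, List.reduceOption_cons_of_some]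
    exact congrArg _ (reduceOption_interleave v h (by simpa using hl))

theorem interleave_map_vertical_reduceOption :
    ∀ w : List (Option β), interleave (w.map vertical) w.reduceOption = w
  | [] => rfl
  | none :: w => by
    rw [List.reduceOption_cons_of_none]
    exact congrArg _ (interleave_map_vertical_reduceOption w)
  | some b :: w => by
    rw [List.reduceOption_cons_of_some]
    exact congrArg _ (interleave_map_vertical_reduceOption w)

theorem length_reduceOption (w : List (Option β)) :
    w.reduceOption.length = (w.map vertical).count D := by
  induction w with
  | nil => rfl
  | cons o w ih =>
    cases o <;>
      simp [List.reduceOption_cons_of_none, List.reduceOption_cons_of_some, vertical, ih]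

end Interleave

def stepOf : Option DyckStep → ℤ × ℤ
  | none => (0, 1)
  | some U => (1, -1)
  | some D => (-1, -1)

theorem stepOf_injective : Function.Injective stepOf := by
  rintro (_ | _ | _) (_ | _ | _) h <;> simp_all [stepOf]

theorem range_stepOf : Set.range stepOf = {(0, 1), (-1, -1), (1, -1)} := by
  ext s
  constructor
  · rintro ⟨_ | _ | _, rfl⟩ <;> simp [stepOf]
  · rintro (rfl | rfl | rfl)
    exacts [⟨none, rfl⟩, ⟨some D, rfl⟩, ⟨some U, rfl⟩]

theorem sum_map_stepOf (w : List (Option DyckStep)) :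
    (w.map stepOf).sum = (excess w.reduceOption, excess (w.map vertical)) := by
  induction w with
  | nil => rfl
  | cons o w ih =>
    rcases o with _ | _ | _ <;>
      simp only [List.map_cons, List.sum_cons, ih, stepOf, vertical, excess_cons_U,
        excess_cons_D, List.reduceOption_cons_of_none, List.reduceOption_cons_of_some,
        Prod.mk_add_mk] <;>
      ring_nf

theorem isWalkTo_map_stepOf_iff (w : List (Option DyckStep)) :
    IsWalkTo (0, 0) (w.map stepOf) ↔ IsDyck (w.map vertical) ∧ IsDyck w.reduceOption := by
  simp only [IsWalkTo, isDyck_iff_excess, ← List.map_take, sum_map_stepOf, Prod.mk.injEq,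
    forall_and, List.forall_reduceOption_take_iff (fun l => 0 ≤ excess l)]
  tauto

theorem qpWalks_eq_card_dyck (m : ℕ) :
    qpWalks {(0, 1), (-1, -1), (1, -1)} m (0, 0) =
      Nat.card {w : List (Option DyckStep) //
        w.length = m ∧ IsDyck (w.map vertical) ∧ IsDyck w.reduceOption} := by
  rw [qpWalks_eq_card_list, ← range_stepOf,
    Nat.card_list_forall_mem_range stepOf_injective (fun l => l.length = m ∧ IsWalkTo (0, 0) l)]
  simp only [List.length_map, isWalkTo_map_stepOf_iff]

theorem two_mul_count_U_map_vertical {w : List (Option DyckStep)}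
    (hv : IsDyck (w.map vertical)) : 2 * (w.map vertical).count U = w.length := by
  rw [hv.two_mul_count_U, List.length_map]

theorem four_mul_count_U_reduceOption {w : List (Option DyckStep)}
    (hv : IsDyck (w.map vertical)) (hh : IsDyck w.reduceOption) :
    4 * w.reduceOption.count U = w.length := by
  have hvlen := two_mul_count_U_map_vertical hv
  have hhlen := hh.two_mul_count_U
  rw [length_reduceOption, ← hv.1] at hhlen
  omega

theorem length_eq_count_D_of_semilength {n : ℕ} {v h : DyckWord} (hv : v.semilength = 2 * n)
    (hh : h.semilength = n) : h.toList.length = v.toList.count D := by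
  rw [← h.two_mul_semilength_eq_length, ← v.semilength_eq_count_D, hv, hh]

def closedWalkEquiv (n : ℕ) :
    {w : List (Option DyckStep) //
        w.length = 4 * n ∧ IsDyck (w.map vertical) ∧ IsDyck w.reduceOption} ≃
      {p : DyckWord // p.semilength = 2 * n} × {p : DyckWord // p.semilength = n} where
  toFun w :=
    have hw := w.2.1
    have hv := two_mul_count_U_map_vertical w.2.2.1
    have hh := four_mul_count_U_reduceOption w.2.2.1 w.2.2.2
    (⟨⟨_, w.2.2.1.1, w.2.2.1.2⟩, show (w.1.map vertical).count U = 2 * n by omega⟩,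
      ⟨⟨_, w.2.2.2.1, w.2.2.2.2⟩, show w.1.reduceOption.count U = n by omega⟩)
  invFun p :=
    have hlen := length_eq_count_D_of_semilength p.1.2 p.2.2
    ⟨interleave p.1.1.toList p.2.1.toList,
      by rw [← List.length_map (f := vertical), map_vertical_interleave _ _ hlen,
        ← p.1.1.two_mul_semilength_eq_length, p.1.2]; ring,
      by simpa only [map_vertical_interleave _ _ hlen] using p.1.1.isDyck,
      by simpa only [reduceOption_interleave _ _ hlen] using p.2.1.isDyck⟩
  left_inv w := Subtype.ext (interleave_map_vertical_reduceOption w.1)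
  right_inv p := by
    have hlen := length_eq_count_D_of_semilength p.1.2 p.2.2
    ext : 3
    · exact map_vertical_interleave _ _ hlen
    · exact reduceOption_interleave _ _ hlen

theorem qpWalks_four_mul (n : ℕ) :
    qpWalks {(0, 1), (-1, -1), (1, -1)} (4 * n) (0, 0) = catalan (2 * n) * catalan n := by
  rw [qpWalks_eq_card_dyck, Nat.card_congr (closedWalkEquiv n), Nat.card_prod,
    Nat.card_eq_fintype_card, Nat.card_eq_fintype_card,
    DyckWord.card_dyckWord_semilength_eq_catalan, DyckWord.card_dyckWord_semilength_eq_catalan]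

theorem qpWalks_eq_zero_of_not_dvd {m : ℕ} (hm : ¬ 4 ∣ m) :
    qpWalks {(0, 1), (-1, -1), (1, -1)} m (0, 0) = 0 := by
  rw [qpWalks_eq_card_dyck, Nat.card_eq_zero]
  exact .inl ⟨fun ⟨w, hlen, hv, hh⟩ =>
    hm (Dvd.intro _ ((four_mul_count_U_reduceOption hv hh).trans hlen))⟩

end QuarterPlane

section CatalanRatio

variable {K : Type*} [Field K]

theorem catalan_succ_cast [CharZero K] (m : ℕ) :
    (catalan (m + 1) : K) = 2 * (2 * m + 1) / (m + 2) * catalan m := by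
  have hcat (j : ℕ) : (catalan j : K) = j.centralBinom / (j + 1) := by
    rw [eq_div_iff (Nat.cast_add_one_ne_zero j), mul_comm]
    exact_mod_cast succ_mul_catalan_eq_centralBinom j
  have hbinom : ((m + 1).centralBinom : K) = 2 * (2 * m + 1) / (m + 1) * m.centralBinom := by
    rw [div_mul_eq_mul_div, eq_div_iff (Nat.cast_add_one_ne_zero m), mul_comm]
    exact_mod_cast Nat.succ_mul_centralBinom_succ m
  have hm1 := Nat.cast_add_one_ne_zero (R := K) m
  have hm2 : (m : K) + 2 ≠ 0 := by exact_mod_cast (m + 1).succ_ne_zero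
  rw [hcat, hcat, hbinom, Nat.cast_add_one, add_assoc, one_add_one_eq_two]
  field_simp

theorem catalan_mul_catalan_eq_ascPochhammer [LinearOrder K] [IsStrictOrderedRing K] (k : ℕ) :
    (catalan (2 * k + 2) * catalan (k + 1) : K) =
      2 * 64 ^ k * (ascPochhammer K k).eval (5/4) * (ascPochhammer K k).eval (3/2) *
          (ascPochhammer K k).eval (7/4) /
        ((ascPochhammer K k).eval 2 * (ascPochhammer K k).eval (5/2) *
          (ascPochhammer K k).eval 3) := by
  induction k with
  | zero => norm_num [catalan_two, catalan_one]
  | succ k ih =>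
    have hratio : (catalan (2 * (k + 1) + 2) * catalan (k + 1 + 1) : K) =
        8 * (4 * k + 5) * (4 * k + 7) * (2 * k + 3) / ((2 * k + 4) * (2 * k + 5) * (k + 3)) *
          (catalan (2 * k + 2) * catalan (k + 1)) := by
      rw [show 2 * (k + 1) + 2 = 2 * k + 2 + 1 + 1 by ring, catalan_succ_cast, catalan_succ_cast,
        catalan_succ_cast (k + 1)]
      push_cast
      field_simp
      ring
    have h2 := (ascPochhammer_pos k (2 : K) (by norm_num)).ne'
    have h52 := (ascPochhammer_pos k (5/2 : K) (by norm_num)).ne'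
    have h3 := (ascPochhammer_pos k (3 : K) (by norm_num)).ne'
    rw [hratio, ih]
    simp only [ascPochhammer_succ_eval]
    field_simp
    ring

end CatalanRatio

theorem closed_walks_step_set_8 :
    (∀ n : ℕ, 1 ≤ n →
      (qpWalks {(0,1), (-1,-1), (1,-1)} (4 * n) (0, 0) : ℚ) =
        2 * 64 ^ (n - 1) * (ascPochhammer ℚ (n - 1)).eval (5/4) *
            (ascPochhammer ℚ (n - 1)).eval (3/2) * (ascPochhammer ℚ (n - 1)).eval (7/4) /
          ((ascPochhammer ℚ (n - 1)).eval 2 * (ascPochhammer ℚ (n - 1)).eval (5/2) *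
            (ascPochhammer ℚ (n - 1)).eval 3)) ∧
    (∀ m : ℕ, ¬ (4 ∣ m) → qpWalks {(0,1), (-1,-1), (1,-1)} m (0, 0) = 0) := by
  refine ⟨fun n hn => ?_, fun m hm => QuarterPlane.qpWalks_eq_zero_of_not_dvd hm⟩
  obtain ⟨k, rfl⟩ := Nat.exists_eq_add_of_le' hn
  rw [QuarterPlane.qpWalks_four_mul, Nat.add_sub_cancel, show 2 * (k + 1) = 2 * k + 2 by ring]
  push_cast
  exact catalan_mul_catalan_eq_ascPochhammer k
end
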